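/- Let α = 1 and 0 ≤ β < 1/2, and let (b_n) be a positive sequence with b_n ↑ ∞ satisfying b_n ≤ n^{1−2β}/ln n for all large n. Define α̂_n = μ̂_n / ln b_n. Then there exists N such that for all n ≥ N: P( |α̂_n − 1| ≥ 2√2/(n^β ln b_n) ) ≤ 2/n². -/

import Mathlib

open MeasureTheory ProbabilityTheory Filter Real Set

/-- `trunc b x = x · 1{x ≤ b}` : truncation of a value at level `b`. -/
noncomputable def trunc (b x : ℝ) : ℝ := if x ≤ b then x else 0

/-- Truncated sample mean `μ̂_n = n⁻¹ ∑_{k<n} X_k(b_n)`. -/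
noncomputable def truncSampleMean {Ω : Type*} (X : ℕ → Ω → ℝ) (b : ℕ → ℝ)
    (n : ℕ) (ω : Ω) : ℝ :=
  (∑ k ∈ Finset.range n, trunc (b n) (X k ω)) / n

/-- `X` is a Pareto random variable with tail index `α`:
`X` is measurable and `P(X ≤ x) = 1 - x^{-α}` for all `x ≥ 1`. -/
def IsParetoRV {Ω : Type*} [MeasurableSpace Ω] (P : Measure Ω) (X : Ω → ℝ)
    (α : ℝ) : Prop :=
  Measurable X ∧ ∀ x : ℝ, 1 ≤ x → P {ω | X ω ≤ x} = ENNReal.ofReal (1 - x ^ (-α))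


/-!
Write `S = ∑_{k<n} X_k(b_n)`, `L = ln b_n` and `q = n^β`. Under the density `x⁻²` on `[1, ∞)` the
truncated variable `X(b)` lies in `[0, b]` and has mean `ln b` and second moment `b - 1`. Together
with `eˣ ≤ 1 + x + (13/18) x²` for `|x| ≤ 1` this gives the Bernstein-type bound
`E e^{u X(b)} ≤ exp (u ln b + (13/18) u² b)` for `|u| b ≤ 1`. The event in question is
`|S - nL| ≥ 2√2 n / q`, and the Chernoff bound at `u = ±1 / (q b_n)` bounds its probability by
`2 exp (-(2√2 - 13/18) n / (q² b_n))`. The growth condition says `n / (q² b_n) ≥ ln n`, and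
`2√2 - 13/18 ≥ 2`.
-/

lemma measurable_trunc (b : ℝ) : Measurable (trunc b) :=
  Measurable.ite measurableSet_Iic measurable_id measurable_const

lemma trunc_of_lt {b x : ℝ} (h : b < x) : trunc b x = 0 := if_neg (not_le.2 h)

lemma abs_trunc_le {b x : ℝ} (hb : 0 ≤ b) (hx : 0 ≤ x) : |trunc b x| ≤ b := by
  unfold trunc
  split_ifs with h
  · rwa [abs_of_nonneg hx]
  · simpa using hb

lemma exp_le_one_add_add_sq_of_abs_le_one {x : ℝ} (hx : |x| ≤ 1) :
    exp x ≤ 1 + x + 13 / 18 * x ^ 2 := by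
  have h := (abs_sub_le_iff.1 (Real.exp_bound hx (n := 3) (by norm_num))).1
  norm_num [Finset.sum_range_succ, Nat.factorial] at h
  have hcube : |x| ^ 3 ≤ x ^ 2 := by
    rw [← sq_abs x, pow_succ]
    exact mul_le_of_le_one_right (by positivity) hx
  nlinarith

section Chernoff

variable {Ω : Type*} [MeasurableSpace Ω] {μ : Measure Ω}

lemma integrable_exp_mul_of_ae_abs_le [IsFiniteMeasure μ] {Y : Ω → ℝ} {c : ℝ}
    (hY : AEMeasurable Y μ) (hbd : ∀ᵐ ω ∂μ, |Y ω| ≤ c) (s : ℝ) :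
    Integrable (fun ω => exp (s * Y ω)) μ := by
  refine .of_bound (hY.const_mul s).exp.aestronglyMeasurable (exp (|s| * c)) ?_
  filter_upwards [hbd] with ω hω
  rw [norm_of_nonneg (exp_pos _).le, exp_le_exp]
  calc s * Y ω ≤ |s| * |Y ω| := abs_mul s (Y ω) ▸ le_abs_self _
    _ ≤ |s| * c := by gcongr

lemma mgf_le_exp_of_ae_abs_le [IsProbabilityMeasure μ] {Y : Ω → ℝ} {c s : ℝ}
    (hY : AEMeasurable Y μ) (hbd : ∀ᵐ ω ∂μ, |Y ω| ≤ c) (hs : |s| * c ≤ 1) :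
    mgf Y μ s ≤ exp (s * (∫ ω, Y ω ∂μ) + 13 / 18 * s ^ 2 * ∫ ω, Y ω ^ 2 ∂μ) := by
  have hint : Integrable Y μ := .of_bound hY.aestronglyMeasurable c (by simpa using hbd)
  have hint_sq : Integrable (fun ω => Y ω ^ 2) μ := by
    refine .of_bound (hY.pow_const 2).aestronglyMeasurable (c ^ 2) ?_
    filter_upwards [hbd] with ω hω
    simpa using pow_le_pow_left₀ (abs_nonneg _) hω 2
  have hpointwise : ∀ᵐ ω ∂μ, exp (s * Y ω) ≤ 1 + s * Y ω + 13 / 18 * s ^ 2 * Y ω ^ 2 := by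
    filter_upwards [hbd] with ω hω
    have hsY : |s * Y ω| ≤ 1 := by
      rw [abs_mul]
      exact (mul_le_mul_of_nonneg_left hω (abs_nonneg s)).trans hs
    simpa [mul_pow, mul_assoc] using exp_le_one_add_add_sq_of_abs_le_one hsY
  have hint_lin : Integrable (fun ω => 1 + s * Y ω) μ := (integrable_const 1).add (hint.const_mul s)
  have hint_quad : Integrable (fun ω => 13 / 18 * s ^ 2 * Y ω ^ 2) μ := hint_sq.const_mul _
  calc mgf Y μ s ≤ ∫ ω, (1 + s * Y ω + 13 / 18 * s ^ 2 * Y ω ^ 2) ∂μ :=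
        integral_mono_ae (integrable_exp_mul_of_ae_abs_le hY hbd s) (hint_lin.add hint_quad)
          hpointwise
    _ = 1 + s * (∫ ω, Y ω ∂μ) + 13 / 18 * s ^ 2 * ∫ ω, Y ω ^ 2 ∂μ := by
        rw [integral_add hint_lin hint_quad, integral_add (integrable_const 1) (hint.const_mul s),
          integral_const_mul, integral_const_mul]
        simp
    _ ≤ exp (s * (∫ ω, Y ω ∂μ) + 13 / 18 * s ^ 2 * ∫ ω, Y ω ^ 2 ∂μ) := by
        linarith [add_one_le_exp (s * (∫ ω, Y ω ∂μ) + 13 / 18 * s ^ 2 * ∫ ω, Y ω ^ 2 ∂μ)]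

lemma measureReal_abs_sub_ge_le_of_mgf_le [IsFiniteMeasure μ] {S : Ω → ℝ} {m K s : ℝ}
    (hs : 0 ≤ s) (hint : ∀ u, |u| = s → Integrable (fun ω => exp (u * S ω)) μ)
    (hmgf : ∀ u, |u| = s → mgf S μ u ≤ exp (u * m + K)) (t : ℝ) :
    μ.real {ω | t ≤ |S ω - m|} ≤ 2 * exp (-(s * t) + K) := by
  have habs_neg : |-s| = s := by rw [abs_neg, abs_of_nonneg hs]
  have hupper : μ.real {ω | m + t ≤ S ω} ≤ exp (-(s * t) + K) := calc
    _ ≤ exp (-s * (m + t)) * mgf S μ s :=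
        measure_ge_le_exp_mul_mgf _ hs (hint s (abs_of_nonneg hs))
    _ ≤ exp (-s * (m + t)) * exp (s * m + K) := by gcongr; exact hmgf s (abs_of_nonneg hs)
    _ = _ := by rw [← exp_add]; ring_nf
  have hlower : μ.real {ω | S ω ≤ m - t} ≤ exp (-(s * t) + K) := calc
    _ ≤ exp (-(-s) * (m - t)) * mgf S μ (-s) :=
        measure_le_le_exp_mul_mgf _ (neg_nonpos.2 hs) (hint (-s) habs_neg)
    _ ≤ exp (-(-s) * (m - t)) * exp (-s * m + K) := by gcongr; exact hmgf (-s) habs_neg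
    _ = _ := by rw [← exp_add]; ring_nf
  have hsplit : {ω | t ≤ |S ω - m|} ⊆ {ω | m + t ≤ S ω} ∪ {ω | S ω ≤ m - t} := by
    rintro ω (hω : t ≤ |S ω - m|)
    rcases le_abs'.1 hω with h | h
    · exact Or.inr (show S ω ≤ m - t by linarith)
    · exact Or.inl (show m + t ≤ S ω by linarith)
  calc μ.real {ω | t ≤ |S ω - m|}
      ≤ μ.real {ω | m + t ≤ S ω} + μ.real {ω | S ω ≤ m - t} :=
        (measureReal_mono hsplit).trans (measureReal_union_le _ _)
    _ ≤ 2 * exp (-(s * t) + K) := by linarith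

end Chernoff

instance : IsProbabilityMeasure (paretoMeasure 1 1) :=
  isProbabilityMeasure_paretoMeasure one_pos one_pos

lemma paretoPDFReal_one_one (x : ℝ) :
    paretoPDFReal 1 1 x = if 1 ≤ x then (x ^ 2)⁻¹ else 0 := by
  unfold paretoPDFReal
  split_ifs with hx
  · rw [one_rpow, mul_one, one_mul, show -((1 : ℝ) + 1) = -(2 : ℕ) by norm_num,
      rpow_neg (by linarith), rpow_natCast]
  · rfl

lemma integral_paretoMeasure_one_one {f : ℝ → ℝ} {c : ℝ} (hc : 1 ≤ c)
    (hf : ∀ x, c < x → f x = 0) :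
    ∫ x, f x ∂paretoMeasure 1 1 = ∫ x in 1..c, f x / x ^ 2 := by
  have hdens : (fun x => (paretoPDF 1 1 x).toReal • f x) =
      (Icc 1 c).indicator (fun x => f x / x ^ 2) := by
    ext x
    rw [paretoPDF, ENNReal.toReal_ofReal (paretoPDFReal_nonneg zero_le_one zero_le_one x),
      paretoPDFReal_one_one, smul_eq_mul]
    by_cases h1 : 1 ≤ x
    · by_cases h2 : x ≤ c
      · rw [if_pos h1, indicator_of_mem (show x ∈ Icc 1 c from ⟨h1, h2⟩), inv_mul_eq_div]
      · rw [hf x (not_le.1 h2), mul_zero, indicator_of_notMem (fun h => h2 h.2)]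
    · rw [if_neg h1, zero_mul, indicator_of_notMem (fun h => h1 h.1)]
  rw [paretoMeasure, integral_withDensity_eq_integral_toReal_smul
    (f := paretoPDF 1 1) (measurable_paretoPDFReal 1 1).ennreal_ofReal
    (ae_of_all _ fun _ => ENNReal.ofReal_lt_top),
    hdens, integral_indicator measurableSet_Icc, integral_Icc_eq_integral_Ioc,
    intervalIntegral.integral_of_le hc]

lemma paretoMeasure_one_one_Iic {r : ℝ} (hr : 1 ≤ r) :
    paretoMeasure 1 1 (Iic r) = ENNReal.ofReal (1 - r⁻¹) := by
  rw [← ofReal_measureReal, ← integral_indicator_one measurableSet_Iic,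
    integral_paretoMeasure_one_one (f := (Iic r).indicator 1) hr fun x hx =>
      indicator_of_notMem (notMem_Iic.2 hx) _]
  have h0 : (0 : ℝ) ∉ uIcc 1 r := by rw [uIcc_of_le hr]; exact fun h => by linarith [h.1]
  rw [intervalIntegral.integral_congr (g := fun x => x ^ (-2 : ℤ)) fun x hx => by
      rw [uIcc_of_le hr] at hx
      rw [indicator_of_mem (show x ∈ Iic r from hx.2), Pi.one_apply, one_div]
      simp [zpow_neg]]
  rw [integral_zpow (Or.inr ⟨by norm_num, h0⟩)]
  norm_num
  ring_nf

lemma integral_trunc_paretoMeasure_one_one {c : ℝ} (hc : 1 ≤ c) :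
    ∫ x, trunc c x ∂paretoMeasure 1 1 = log c := by
  rw [integral_paretoMeasure_one_one hc fun _ => trunc_of_lt,
    intervalIntegral.integral_congr (g := fun x => x⁻¹) fun x hx => by
      rw [uIcc_of_le hc] at hx
      have : x ≠ 0 := by linarith [hx.1]
      simp only [trunc, if_pos hx.2]
      field_simp,
    integral_inv_of_pos one_pos (by linarith), div_one]

lemma integral_trunc_sq_paretoMeasure_one_one {c : ℝ} (hc : 1 ≤ c) :
    ∫ x, trunc c x ^ 2 ∂paretoMeasure 1 1 = c - 1 := by
  rw [integral_paretoMeasure_one_one hc fun x hx => by simp [trunc_of_lt hx],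
    intervalIntegral.integral_congr (g := fun _ => 1) fun x hx => by
      rw [uIcc_of_le hc] at hx
      have : x ≠ 0 := by linarith [hx.1]
      simp only [trunc, if_pos hx.2]
      field_simp]
  simp

namespace IsParetoRV

variable {Ω : Type*} [MeasurableSpace Ω] {P : Measure Ω} {X : Ω → ℝ}

lemma ae_one_lt (hX : IsParetoRV P X 1) : ∀ᵐ ω ∂P, 1 < X ω := by
  simp [ae_iff, hX.2 1 le_rfl]

lemma map_eq [IsProbabilityMeasure P] (hX : IsParetoRV P X 1) : P.map X = paretoMeasure 1 1 := by
  have hIic : ∀ r, 1 ≤ r → P.map X (Iic r) = paretoMeasure 1 1 (Iic r) := fun r hr => by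
    rw [Measure.map_apply hX.1 measurableSet_Iic, paretoMeasure_one_one_Iic hr, ← rpow_neg_one]
    exact hX.2 r hr
  refine Measure.ext_of_Iic _ _ fun r => ?_
  rcases le_or_gt 1 r with hr | hr
  · exact hIic r hr
  have hnull : paretoMeasure 1 1 (Iic 1) = 0 := by simp [paretoMeasure_one_one_Iic le_rfl]
  rw [measure_mono_null (Iic_subset_Iic.2 hr.le) hnull,
    measure_mono_null (Iic_subset_Iic.2 hr.le) ((hIic 1 le_rfl).trans hnull)]

lemma integral_comp [IsProbabilityMeasure P] (hX : IsParetoRV P X 1) {g : ℝ → ℝ}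
    (hg : AEStronglyMeasurable g (P.map X)) :
    ∫ ω, g (X ω) ∂P = ∫ x, g x ∂paretoMeasure 1 1 := by
  rw [← hX.map_eq, integral_map hX.1.aemeasurable hg]

lemma ae_abs_trunc_le (hX : IsParetoRV P X 1) {c : ℝ} (hc : 0 ≤ c) :
    ∀ᵐ ω ∂P, |trunc c (X ω)| ≤ c := by
  filter_upwards [hX.ae_one_lt] with ω hω using abs_trunc_le hc (by linarith)

lemma mgf_trunc_le [IsProbabilityMeasure P] (hX : IsParetoRV P X 1) {c u : ℝ} (hc : 1 ≤ c)
    (hu : |u| * c ≤ 1) :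
    mgf (fun ω => trunc c (X ω)) P u ≤ exp (u * log c + 13 / 18 * u ^ 2 * c) := by
  have hmeas : Measurable (trunc c) := measurable_trunc c
  have hmean : ∫ ω, trunc c (X ω) ∂P = log c := by
    rw [hX.integral_comp hmeas.aestronglyMeasurable, integral_trunc_paretoMeasure_one_one hc]
  have hsq : ∫ ω, trunc c (X ω) ^ 2 ∂P = c - 1 := by
    rw [hX.integral_comp (g := fun x => trunc c x ^ 2) (hmeas.pow_const 2).aestronglyMeasurable,
      integral_trunc_sq_paretoMeasure_one_one hc]
  calc mgf (fun ω => trunc c (X ω)) P u ≤ exp (u * log c + 13 / 18 * u ^ 2 * (c - 1)) := by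
        simpa only [hmean, hsq] using mgf_le_exp_of_ae_abs_le (Y := fun ω => trunc c (X ω))
          (hmeas.comp hX.1).aemeasurable (hX.ae_abs_trunc_le (by linarith)) hu
    _ ≤ exp (u * log c + 13 / 18 * u ^ 2 * c) := by gcongr; linarith

end IsParetoRV

theorem measureReal_abs_sum_trunc_sub_ge_le {Ω : Type*} [MeasurableSpace Ω] {P : Measure Ω}
    [IsProbabilityMeasure P] {X : ℕ → Ω → ℝ} (hiid : iIndepFun X P)
    (hPar : ∀ k, IsParetoRV P (X k) 1) {c s : ℝ} (hc : 1 ≤ c) (hs : 0 ≤ s) (hsc : s * c ≤ 1)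
    (n : ℕ) (t : ℝ) :
    P.real {ω | t ≤ |∑ k ∈ Finset.range n, trunc c (X k ω) - n * log c|} ≤
      2 * exp (-(s * t) + n * (13 / 18 * s ^ 2 * c)) := by
  set Y : ℕ → Ω → ℝ := fun k ω => trunc c (X k ω)
  have hYmeas : ∀ k, Measurable (Y k) := fun k => (measurable_trunc c).comp (hPar k).1
  have hYindep : iIndepFun Y P := hiid.comp (fun _ => trunc c) fun _ => measurable_trunc c
  have hint : ∀ u, Integrable (fun ω => exp (u * (∑ k ∈ Finset.range n, Y k) ω)) P := fun u =>
    hYindep.integrable_exp_mul_sum hYmeas fun k _ => integrable_exp_mul_of_ae_abs_le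
      (hYmeas k).aemeasurable ((hPar k).ae_abs_trunc_le (by linarith)) u
  have hmgf : ∀ u, |u| = s → mgf (∑ k ∈ Finset.range n, Y k) P u ≤
      exp (u * (n * log c) + n * (13 / 18 * s ^ 2 * c)) := fun u hu => by
    rw [hYindep.mgf_sum hYmeas]
    calc ∏ k ∈ Finset.range n, mgf (Y k) P u
        ≤ ∏ _k ∈ Finset.range n, exp (u * log c + 13 / 18 * u ^ 2 * c) :=
          Finset.prod_le_prod (fun _ _ => mgf_nonneg) fun k _ =>
            (hPar k).mgf_trunc_le hc (hu ▸ hsc)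
      _ = exp (u * (n * log c) + n * (13 / 18 * s ^ 2 * c)) := by
          rw [Finset.prod_const, Finset.card_range, ← exp_nat_mul, ← hu, sq_abs]
          ring_nf
  simpa only [Finset.sum_apply] using
    measureReal_abs_sub_ge_le_of_mgf_le hs (fun u _ => hint u) hmgf t

lemma le_abs_div_div_sub_one_iff {S n L ε : ℝ} (hn : 0 < n) (hL : 0 < L) :
    ε / L ≤ |S / n / L - 1| ↔ n * ε ≤ |S - n * L| := by
  have hnL : 0 < n * L := mul_pos hn hL
  rw [show S / n / L - 1 = (S - n * L) / (n * L) by field_simp, abs_div, abs_of_pos hnL,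
    div_le_div_iff₀ hL hnL, show ε * (n * L) = n * ε * L by ring, mul_le_mul_iff_left₀ hL]

lemma log_le_div_of_le_rpow_div_log {n β c : ℝ} (hn : 1 < n) (hc : 0 < c)
    (h : c ≤ n ^ (1 - 2 * β) / log n) : log n ≤ n / ((n ^ β) ^ 2 * c) := by
  have hpow : n ^ (1 - 2 * β) = n / (n ^ β) ^ 2 := by
    rw [rpow_sub (by linarith), rpow_one, ← rpow_mul_natCast (by linarith), mul_comm]
    norm_num
  rw [hpow, le_div_iff₀ (log_pos hn)] at h
  rw [le_div_iff₀ (by positivity)]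
  calc log n * ((n ^ β) ^ 2 * c) = c * log n * (n ^ β) ^ 2 := by ring
    _ ≤ n / (n ^ β) ^ 2 * (n ^ β) ^ 2 := by gcongr
    _ = n := div_mul_cancel₀ _ (by positivity)

lemma exp_chernoff_exponent_le_inv_sq {n q c : ℝ} (hn : 1 ≤ n) (hq : 0 < q) (hc : 0 < c)
    (hlog : log n ≤ n / (q ^ 2 * c)) :
    exp (-((q * c)⁻¹ * (n * (2 * √2 / q))) + n * (13 / 18 * (q * c)⁻¹ ^ 2 * c)) ≤ (n ^ 2)⁻¹ := by
  have hexponent : -((q * c)⁻¹ * (n * (2 * √2 / q))) + n * (13 / 18 * (q * c)⁻¹ ^ 2 * c) =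
      -((2 * √2 - 13 / 18) * (n / (q ^ 2 * c))) := by
    field_simp
    ring
  have hsqrt : 49 / 36 ≤ √2 := le_sqrt_of_sq_le (by norm_num)
  have hlog_nonneg : 0 ≤ log n := log_nonneg hn
  rw [hexponent, ← exp_log (by positivity : 0 < n ^ 2), ← exp_neg, exp_le_exp, log_pow]
  push_cast
  nlinarith

theorem truncEstimator_alphaOne_concentration_general {Ω : Type*} [MeasurableSpace Ω]
    (P : Measure Ω) [IsProbabilityMeasure P]
    (β : ℝ) (hβ0 : 0 ≤ β)
    (X : ℕ → Ω → ℝ)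
    (hiid : iIndepFun X P)
    (hPar : ∀ k, IsParetoRV P (X k) 1)
    (b : ℕ → ℝ)
    (hbtop : Tendsto b atTop atTop)
    (hgrowth : ∀ᶠ n : ℕ in atTop,
      b n ≤ (n : ℝ) ^ (1 - 2 * β) / Real.log n) :
    ∃ N : ℕ, ∀ n ≥ N,
      P {ω | 2 * Real.sqrt 2 / ((n : ℝ) ^ β * Real.log (b n)) ≤
          |truncSampleMean X b n ω / Real.log (b n) - 1|} ≤
        ENNReal.ofReal (2 / (n : ℝ) ^ 2) := by
  obtain ⟨N, hN⟩ := eventually_atTop.1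
    (hgrowth.and ((hbtop.eventually_gt_atTop 1).and (eventually_gt_atTop 1)))
  refine ⟨N, fun n hn => ?_⟩
  obtain ⟨hbn, hb1, hn_gt⟩ := hN n hn
  have hn1 : (1 : ℝ) < n := by exact_mod_cast hn_gt
  set q := (n : ℝ) ^ β
  have hq : 1 ≤ q := one_le_rpow hn1.le hβ0
  have hevent : {ω | 2 * √2 / (q * log (b n)) ≤ |truncSampleMean X b n ω / log (b n) - 1|} =
      {ω | n * (2 * √2 / q) ≤ |∑ k ∈ Finset.range n, trunc (b n) (X k ω) - n * log (b n)|} := by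
    ext ω
    rw [mem_ofPred_eq, mem_ofPred_eq, truncSampleMean, ← div_div]
    exact le_abs_div_div_sub_one_iff (by linarith) (log_pos hb1)
  have hsum := measureReal_abs_sum_trunc_sub_ge_le hiid hPar hb1.le (s := (q * b n)⁻¹)
    (by positivity) (by field_simp; exact hq) n (n * (2 * √2 / q))
  have hexp := exp_chernoff_exponent_le_inv_sq hn1.le (by positivity) (by linarith)
    (log_le_div_of_le_rpow_div_log hn1 (by linarith) hbn)
  rw [hevent, ← ofReal_measureReal]
  refine ENNReal.ofReal_le_ofReal (hsum.trans ?_)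
  rw [div_eq_mul_inv]
  exact mul_le_mul_of_nonneg_left hexp zero_le_two

theorem truncEstimator_alphaOne_concentration {Ω : Type*} [MeasurableSpace Ω]
    (P : Measure Ω) [IsProbabilityMeasure P]
    (β : ℝ) (hβ0 : 0 ≤ β) (hβ : β < 1 / 2)
    (X : ℕ → Ω → ℝ)
    (hiid : iIndepFun X P)
    (hPar : ∀ k, IsParetoRV P (X k) 1)
    (b : ℕ → ℝ) (hbpos : ∀ n, 0 < b n) (hbmono : Monotone b)
    (hbtop : Tendsto b atTop atTop)
    (hgrowth : ∀ᶠ n : ℕ in atTop,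
      b n ≤ (n : ℝ) ^ (1 - 2 * β) / Real.log n) :
    ∃ N : ℕ, ∀ n ≥ N,
      P {ω | 2 * Real.sqrt 2 / ((n : ℝ) ^ β * Real.log (b n)) ≤
          |truncSampleMean X b n ω / Real.log (b n) - 1|} ≤
        ENNReal.ofReal (2 / (n : ℝ) ^ 2) :=
  truncEstimator_alphaOne_concentration_general P β hβ0 X hiid hPar b hbtop hgrowth
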